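/- Let p be a prime and let P be a finitely generated group. Then P is a finite p-group if and only if there exists an integer n ≥ 1 such that γ_n^p P = {1}. -/

import Mathlib

/-! Common definitions following the paper "Residual p properties of mapping class groups
and surface groups" by L. Paris. -/

/-- The commutator `[g,h] = g⁻¹h⁻¹gh`. -/
def commAB {G : Type*} [Group G] (g h : G) : G := g⁻¹ * h⁻¹ * g * h

/-- The commutator subgroup `[K,H]`, generated by all `[g,h]` with `g ∈ K`, `h ∈ H`. -/
def commSub {G : Type*} [Group G] (K H : Subgroup G) : Subgroup G :=
  Subgroup.closure {x | ∃ g ∈ K, ∃ h ∈ H, x = commAB g h}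

/-- The subgroup `[K,H]^p`, generated by all `[g,h]` (`g ∈ K`, `h ∈ H`) together with all
`h^p` (`h ∈ H`). -/
def pComm (p : ℕ) {G : Type*} [Group G] (K H : Subgroup G) : Subgroup G :=
  Subgroup.closure ({x | ∃ g ∈ K, ∃ h ∈ H, x = commAB g h} ∪ {x | ∃ h ∈ H, x = h ^ p})

/-- The lower `𝔽_p`-linear central filtration: `γ_1^p G = G` and
`γ_{n+1}^p G = [G, γ_n^p G]^p` (with the harmless convention `γ_0^p G = G`). -/
def gammaP (p : ℕ) (G : Type*) [Group G] : ℕ → Subgroup G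
  | 0 => ⊤
  | 1 => ⊤
  | n + 2 => pComm p ⊤ (gammaP p G (n + 1))

theorem pComm_top_normal (p : ℕ) {G : Type*} [Group G] {H : Subgroup G} (hH : H.Normal) :
    (pComm p ⊤ H).Normal := by
  constructor
  intro x hx g
  unfold pComm at hx ⊢
  induction hx using Subgroup.closure_induction with
  | mem y hy =>
    apply Subgroup.subset_closure
    rcases hy with ⟨a, -, h, hh, rfl⟩ | ⟨h, hh, rfl⟩
    · exact Or.inl ⟨g * a * g⁻¹, trivial, g * h * g⁻¹, hH.conj_mem h hh g,
        by unfold commAB; group⟩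
    · exact Or.inr ⟨g * h * g⁻¹, hH.conj_mem h hh g, (conj_pow).symm⟩
  | one => simpa using Subgroup.one_mem _
  | mul a b ha hb iha ihb =>
    have e : g * (a * b) * g⁻¹ = (g * a * g⁻¹) * (g * b * g⁻¹) := by group
    rw [e]; exact Subgroup.mul_mem _ iha ihb
  | inv a ha iha =>
    have e : g * a⁻¹ * g⁻¹ = (g * a * g⁻¹)⁻¹ := by group
    rw [e]; exact Subgroup.inv_mem _ iha

instance gammaP_normal (p : ℕ) (G : Type*) [Group G] : ∀ n, (gammaP p G n).Normal
  | 0 => by unfold gammaP; infer_instance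
  | 1 => by unfold gammaP; infer_instance
  | n + 2 => by unfold gammaP; exact pComm_top_normal p (gammaP_normal p G (n + 1))

/-- `G` is residually `p`: every nontrivial element survives in some finite `p`-group
quotient. -/
def IsResiduallyP (p : ℕ) (G : Type*) [Group G] : Prop :=
  ∀ g : G, g ≠ 1 → ∃ (P : Type) (_ : Group P) (_ : Finite P) (φ : G →* P),
    IsPGroup p P ∧ Function.Surjective φ ∧ φ g ≠ 1

/-- `G` is conjugacy `p`-separable. -/
def IsConjPSeparable (p : ℕ) (G : Type*) [Group G] : Prop :=
  ∀ g h : G, IsConj g h ∨ ∃ (P : Type) (_ : Group P) (_ : Finite P) (φ : G →* P),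
    IsPGroup p P ∧ Function.Surjective φ ∧ ¬ IsConj (φ g) (φ h)

/-- Property A: every automorphism of `G` preserving every conjugacy class is inner. -/
def PropertyA (G : Type*) [Group G] : Prop :=
  ∀ α : MulAut G, (∀ g : G, IsConj g (α g)) → α ∈ (MulAut.conj : G →* MulAut G).range

/-- `A_n`: the kernel of the natural homomorphism `Aut(G) → Aut(G/γ_{n+1}^p G)`, i.e. the
automorphisms acting trivially modulo `γ_{n+1}^p G`. -/
def An (p : ℕ) (G : Type*) [Group G] (n : ℕ) : Subgroup (MulAut G) where
  carrier := {α | ∀ g : G, g⁻¹ * α g ∈ gammaP p G (n + 1)}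
  one_mem' := by intro g; simpa using Subgroup.one_mem _
  mul_mem' := by
    intro a b ha hb g
    have e : g⁻¹ * (a * b) g = (g⁻¹ * b g) * ((b g)⁻¹ * a (b g)) := by
      rw [MulAut.mul_apply]; group
    rw [e]; exact Subgroup.mul_mem _ (hb g) (ha (b g))
  inv_mem' := by
    intro a ha g
    have h := ha ((a⁻¹ : MulAut G) g)
    rw [MulAut.apply_inv_self] at h
    have e : g⁻¹ * (a⁻¹ : MulAut G) g = (((a⁻¹ : MulAut G) g)⁻¹ * g)⁻¹ := by group
    rw [e]; exact Subgroup.inv_mem _ h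

theorem mem_An {p : ℕ} {G : Type*} [Group G] {n : ℕ} {α : MulAut G} :
    α ∈ An p G n ↔ ∀ g : G, g⁻¹ * α g ∈ gammaP p G (n + 1) := Iff.rfl

/-- `I_p(G)`: the kernel of the natural homomorphism `Aut(G) → Aut(G/γ_2^p G)`. -/
abbrev Ip (p : ℕ) (G : Type*) [Group G] : Subgroup (MulAut G) := An p G 1

/-- `Inn(G)`, viewed as a subgroup of `I_p(G)`. -/
def InnSub (p : ℕ) (G : Type*) [Group G] : Subgroup (Ip p G) :=
  Subgroup.comap (Ip p G).subtype (MulAut.conj : G →* MulAut G).range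

instance innSub_normal (p : ℕ) (G : Type*) [Group G] : (InnSub p G).Normal := by
  constructor
  rintro n hn g
  obtain ⟨x, hx⟩ := hn
  refine ⟨(g : MulAut G) x, ?_⟩
  have hx' : MulAut.conj x = (n : MulAut G) := hx
  show MulAut.conj ((g : MulAut G) x) = ((g * n * g⁻¹ : Ip p G) : MulAut G)
  ext y
  simp only [Subgroup.coe_mul, Subgroup.coe_inv, MulAut.mul_apply, MulAut.conj_apply, ← hx',
    map_mul, map_inv, MulAut.apply_inv_self]

/-- The surface relator `[x_1,y_1][x_2,y_2]⋯[x_ρ,y_ρ]` in the free group on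
`x_1, …, x_ρ, y_1, …, y_ρ`. -/
def surfaceRel (ρ : ℕ) : FreeGroup (Fin ρ ⊕ Fin ρ) :=
  (List.ofFn fun i : Fin ρ =>
    commAB (FreeGroup.of (Sum.inl i)) (FreeGroup.of (Sum.inr i))).prod

/-- The fundamental group of the closed oriented surface of genus `ρ`, given by the
presentation `⟨x_1, …, x_ρ, y_1, …, y_ρ | [x_1,y_1]⋯[x_ρ,y_ρ] = 1⟩`. -/
abbrev SurfaceGroup (ρ : ℕ) : Type :=
  PresentedGroup ({surfaceRel ρ} : Set (FreeGroup (Fin ρ ⊕ Fin ρ)))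

/-!
In a finite `p`-group `G`, the subgroups `γ_n^p G` decrease and so stabilise at some `H` with
`H = [G,H]^p`. Modulo `[G,H]` the image of `H` is central, so there `[G,H]^p` consists of
`p`-th powers of elements of `H`; iterating, every element of that image is a `p^k`-th power
for every `k`, hence trivial. Thus `H ≤ [G,H]`, which forces `H = 1` because `G` is nilpotent.

Conversely, if `γ_{n+1}^p G = 1` then `H = γ_n^p G` is central of exponent `p`, and by
induction `G/H` is a finite `p`-group. Then `H` has finite index in the finitely generated group
`G`, so it is a finitely generated abelian torsion group, hence finite, and `G` is a finite
`p`-group.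
-/

open scoped commutatorElement

section Filtration

variable {G : Type*} [Group G] (p : ℕ)

lemma commAB_mem_pComm {K H : Subgroup G} {g h : G} (hg : g ∈ K) (hh : h ∈ H) :
    commAB g h ∈ pComm p K H :=
  Subgroup.subset_closure (Or.inl ⟨g, hg, h, hh, rfl⟩)

lemma pow_mem_pComm (K : Subgroup G) {H : Subgroup G} {h : G} (hh : h ∈ H) :
    h ^ p ∈ pComm p K H :=
  Subgroup.subset_closure (Or.inr ⟨h, hh, rfl⟩)

lemma commAB_eq_commutatorElement (g h : G) : commAB g h = ⁅g⁻¹, h⁻¹⁆ := by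
  simp only [commAB, commutatorElement_def, inv_inv]

lemma commAB_eq_one_iff (g h : G) : commAB g h = 1 ↔ Commute g h := by
  rw [commAB_eq_commutatorElement, commutatorElement_eq_one_iff_commute, Commute.inv_inv_iff]

lemma pComm_top_le (H : Subgroup G) [hH : H.Normal] : pComm p ⊤ H ≤ H := by
  refine (Subgroup.closure_le _).mpr ?_
  rintro x (⟨g, -, h, hh, rfl⟩ | ⟨h, hh, rfl⟩)
  · rw [commAB_eq_commutatorElement, commutatorElement_def]
    exact H.mul_mem (hH.conj_mem _ (H.inv_mem hh) _) (H.inv_mem (H.inv_mem hh))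
  · exact H.pow_mem hh p

lemma gammaP_succ_succ (n : ℕ) : gammaP p G (n + 2) = pComm p ⊤ (gammaP p G (n + 1)) := rfl

lemma gammaP_antitone : Antitone (gammaP p G) := by
  refine antitone_nat_of_succ_le fun n => ?_
  cases n with
  | zero => exact le_rfl
  | succ n => exact pComm_top_le p _

lemma map_pComm_top {Q : Type*} [Group Q] {f : G →* Q} (hf : Function.Surjective f)
    (H : Subgroup G) : (pComm p ⊤ H).map f = pComm p ⊤ (H.map f) := by
  rw [pComm, pComm, MonoidHom.map_closure, Set.image_union]
  congr 2 <;> ext x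
  · constructor
    · rintro ⟨-, ⟨g, -, h, hh, rfl⟩, rfl⟩
      exact ⟨f g, trivial, f h, H.mem_map_of_mem f hh, by simp [commAB]⟩
    · rintro ⟨g', -, -, ⟨h, hh, rfl⟩, rfl⟩
      obtain ⟨g, rfl⟩ := hf g'
      exact ⟨commAB g h, ⟨g, trivial, h, hh, rfl⟩, by simp [commAB]⟩
  · constructor
    · rintro ⟨-, ⟨h, hh, rfl⟩, rfl⟩
      exact ⟨f h, H.mem_map_of_mem f hh, map_pow f h p⟩
    · rintro ⟨-, ⟨h, hh, rfl⟩, rfl⟩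
      exact ⟨h ^ p, ⟨h, hh, rfl⟩, map_pow f h p⟩

lemma map_gammaP {Q : Type*} [Group Q] {f : G →* Q} (hf : Function.Surjective f) :
    ∀ n, (gammaP p G n).map f = gammaP p Q n
  | 0 | 1 => Subgroup.map_top_of_surjective f hf
  | n + 2 => by rw [gammaP_succ_succ, gammaP_succ_succ, map_pComm_top p hf, map_gammaP hf]

end Filtration

lemma Subgroup.eq_bot_of_le_commutator_top {G : Type*} [Group G] [Group.IsNilpotent G]
    {H : Subgroup G} (hH : H ≤ ⁅H, ⊤⁆) : H = ⊥ := by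
  have h_le : ∀ n, H ≤ (⊤ : Subgroup G).lowerCentralSeries n := by
    intro n
    induction n with
    | zero => exact le_top
    | succ n ih => exact hH.trans (Subgroup.commutator_mono ih le_rfl)
  obtain ⟨n, hn⟩ := Subgroup.nilpotent_iff_lowerCentralSeries.mp ‹_›
  exact le_bot_iff.mp (hn ▸ h_le n)

lemma exists_pow_eq_of_mem_pComm_top {G : Type*} [Group G] (p : ℕ) {H : Subgroup G}
    (hH : H ≤ Subgroup.center G) {x : G} (hx : x ∈ pComm p ⊤ H) : ∃ y ∈ H, y ^ p = x := by
  induction hx using Subgroup.closure_induction with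
  | mem x hx =>
    rcases hx with ⟨g, -, h, hh, rfl⟩ | ⟨h, hh, rfl⟩
    · refine ⟨1, H.one_mem, ?_⟩
      rw [one_pow, eq_comm, commAB_eq_one_iff]
      exact Subgroup.mem_center_iff.mp (hH hh) g
    · exact ⟨h, hh, rfl⟩
  | one => exact ⟨1, H.one_mem, one_pow p⟩
  | mul a b _ _ iha ihb =>
    obtain ⟨y, hy, rfl⟩ := iha
    obtain ⟨z, hz, rfl⟩ := ihb
    have h_comm : Commute y z := (Subgroup.mem_center_iff.mp (hH hy) z).symm
    exact ⟨y * z, H.mul_mem hy hz, h_comm.mul_pow p⟩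
  | inv a _ iha =>
    obtain ⟨y, hy, rfl⟩ := iha
    exact ⟨y⁻¹, H.inv_mem hy, inv_pow y p⟩

namespace IsPGroup

variable {p : ℕ} [Fact p.Prime] {G : Type*} [Group G]

lemma eq_bot_of_forall_exists_pow_eq [Finite G] (hG : IsPGroup p G) {H : Subgroup G}
    (hH : ∀ x ∈ H, ∃ y ∈ H, y ^ p = x) : H = ⊥ := by
  have h_pow : ∀ k, ∀ x ∈ H, ∃ y ∈ H, y ^ p ^ k = x := by
    intro k
    induction k with
    | zero => exact fun x hx => ⟨x, hx, pow_one x⟩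
    | succ k ih =>
      intro x hx
      obtain ⟨y, hy, rfl⟩ := ih x hx
      obtain ⟨z, hz, rfl⟩ := hH y hy
      exact ⟨z, hz, by rw [← pow_mul, ← pow_succ']⟩
  obtain ⟨m, hm⟩ := IsPGroup.iff_card.mp hG
  refine (Subgroup.eq_bot_iff_forall H).mpr fun x hx => ?_
  obtain ⟨y, -, rfl⟩ := h_pow m x hx
  rw [← hm, pow_card_eq_one']

lemma le_commutator_of_le_pComm_top [Finite G] (hG : IsPGroup p G) {H : Subgroup G} [H.Normal]
    (hH : H ≤ pComm p ⊤ H) : H ≤ ⁅(⊤ : Subgroup G), H⁆ := by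
  let N := ⁅(⊤ : Subgroup G), H⁆
  let π := QuotientGroup.mk' N
  have hπ := QuotientGroup.mk'_surjective N
  have h_center : H.map π ≤ Subgroup.center (G ⧸ N) := by
    have h_comm : ⁅(⊤ : Subgroup (G ⧸ N)), H.map π⁆ = ⊥ := by
      rw [← Subgroup.map_top_of_surjective π hπ, ← Subgroup.map_commutator,
        Subgroup.map_eq_bot_iff, QuotientGroup.ker_mk']
    rw [← SetLike.coe_subset_coe, ← Subgroup.centralizer_eq_top_iff_subset, eq_top_iff]
    exact Subgroup.commutator_eq_bot_iff_le_centralizer.mp h_comm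
  have h_le : H.map π ≤ pComm p ⊤ (H.map π) :=
    map_pComm_top p hπ H ▸ Subgroup.map_mono hH
  have h_bot : H.map π = ⊥ := (hG.to_quotient _).eq_bot_of_forall_exists_pow_eq
    fun x hx => exists_pow_eq_of_mem_pComm_top p h_center (h_le hx)
  rwa [Subgroup.map_eq_bot_iff, QuotientGroup.ker_mk'] at h_bot

lemma eq_bot_of_le_pComm_top [Finite G] (hG : IsPGroup p G) {H : Subgroup G} [H.Normal]
    (hH : H ≤ pComm p ⊤ H) : H = ⊥ :=
  have := hG.isNilpotent
  Subgroup.eq_bot_of_le_commutator_top <|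
    (Subgroup.commutator_comm H ⊤).symm ▸ le_commutator_of_le_pComm_top hG hH

lemma exists_gammaP_eq_bot [Finite G] (hG : IsPGroup p G) :
    ∃ n, 1 ≤ n ∧ gammaP p G n = ⊥ := by
  obtain ⟨n, hn⟩ := WellFoundedLT.antitone_chain_condition (gammaP_antitone p (G := G))
  refine ⟨n + 1, n.succ_pos, hG.eq_bot_of_le_pComm_top ?_⟩
  rw [← gammaP_succ_succ, ← hn (n + 2) (by omega), hn (n + 1) (by omega)]

end IsPGroup

lemma IsPGroup.of_isPGroup_subgroup_quotient {p : ℕ} {G : Type*} [Group G] {H : Subgroup G}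
    [H.Normal] (hH : IsPGroup p H) (hQ : IsPGroup p (G ⧸ H)) : IsPGroup p G := by
  intro g
  obtain ⟨a, ha⟩ := hQ g
  have h_mem : g ^ p ^ a ∈ H := by rwa [← QuotientGroup.eq_one_iff, QuotientGroup.mk_pow]
  obtain ⟨b, hb⟩ := hH ⟨_, h_mem⟩
  exact ⟨a + b, by rw [pow_add, pow_mul]; exact congrArg Subtype.val hb⟩

open scoped IsMulCommutative in
lemma Group.finite_of_isMulTorsion_subgroup {G : Type*} [Group G] [Group.FG G] (H : Subgroup G)
    [H.FiniteIndex] [IsMulCommutative H] (hH : IsMulTorsion H) : Finite G :=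
  have := CommGroup.finite_of_fg_isMulTorsion H hH
  Finite.of_subgroup_quotient H

universe u

lemma finite_isPGroup_of_gammaP_eq_bot {p : ℕ} (hp : 0 < p) :
    ∀ (n : ℕ) (G : Type u) [Group G] [Group.FG G], gammaP p G n = ⊥ → Finite G ∧ IsPGroup p G
  | 0, G, _, _, h | 1, G, _, _, h =>
    have : Subsingleton G :=
      subsingleton_of_forall_eq 1 fun x => (Subgroup.eq_bot_iff_forall ⊤).mp h x trivial
    ⟨inferInstance, IsPGroup.of_subsingleton p G⟩
  | n + 2, G, _, _, h => by
    let H := gammaP p G (n + 1)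
    have h_center : H ≤ Subgroup.center G := fun x hx => Subgroup.mem_center_iff.mpr fun g =>
      (commAB_eq_one_iff g x).mp <| (Subgroup.mem_bot.mp (h ▸ commAB_mem_pComm p trivial hx))
    have h_exp : ∀ x ∈ H, x ^ p = 1 := fun x hx =>
      Subgroup.mem_bot.mp (h ▸ pow_mem_pComm p ⊤ hx)
    have h_quot : gammaP p (G ⧸ H) (n + 1) = ⊥ := by
      rw [← map_gammaP p (QuotientGroup.mk'_surjective H), Subgroup.map_eq_bot_iff,
        QuotientGroup.ker_mk']
    obtain ⟨hQ_fin, hQ⟩ := finite_isPGroup_of_gammaP_eq_bot hp (n + 1) (G ⧸ H) h_quot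
    have : H.FiniteIndex := Subgroup.finiteIndex_of_finite_quotient
    have : IsMulCommutative H := Subgroup.le_centralizer_iff_isMulCommutative.mp
      (h_center.trans (Subgroup.center_le_centralizer _))
    have hH_torsion : IsMulTorsion H := fun x =>
      isOfFinOrder_iff_pow_eq_one.mpr ⟨p, hp, Subtype.ext (h_exp x x.2)⟩
    have hH : IsPGroup p H := fun x => ⟨1, Subtype.ext (by rw [pow_one]; exact h_exp x x.2)⟩
    exact ⟨Group.finite_of_isMulTorsion_subgroup H hH_torsion,
      IsPGroup.of_isPGroup_subgroup_quotient hH hQ⟩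

/-- **Lemma 2.2.** A finitely generated group `P` is a finite `p`-group if and only if
`γ_n^p P = {1}` for some `n ≥ 1`. -/
theorem finite_pGroup_iff_gammaP_eq_bot (p : ℕ) (hp : p.Prime) (P : Type*) [Group P]
    (hfg : Group.FG P) :
    (Finite P ∧ IsPGroup p P) ↔ ∃ n : ℕ, 1 ≤ n ∧ gammaP p P n = ⊥ := by
  have := Fact.mk hp
  constructor
  · rintro ⟨_, hP⟩
    exact hP.exists_gammaP_eq_bot
  · rintro ⟨n, -, h⟩
    exact finite_isPGroup_of_gammaP_eq_bot hp.pos n P h
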